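/- arXiv:1410.8567 — 3 statements merged into one kernel-verified Lean document; each statement's English description precedes it below -/
import Mathlib

section
/- Let ω ⊆ ℂ be a neighborhood of 0 and let m_1, m_2 ≥ 1 be integers, m_0 = m_1 + m_2. For i = 0, 1, 2 let P^i_ζ(t) = Σ_{j=0}^{m_i} a^i_j(ζ) t^j be polynomials in t whose coefficients a^i_j are holomorphic functions of ζ on ω. Assume that P^0_ζ(t) = P^1_ζ(t)·P^2_ζ(t) for all ζ ∈ ω, that P^1_0(t) = t^{m_1}, and that a^2_0(0) ≠ 0. Let k_0 ≥ k_1 ≥ ⋯ ≥ k_{m_1−1} be positive integers. Then a^0_j(ζ) = O(ζ^{k_j}) for all 0 ≤ j ≤ m_1 − 1 if and only if a^1_j(ζ) = O(ζ^{k_j}) for all 0 ≤ j ≤ m_1 − 1. -/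
open Polynomial

noncomputable section

/-- The open unit disc in `ℂ`. -/
def unitDisc : Set ℂ := Metric.ball 0 1

/-- `g(ζ) = O((ζ-α)^d)` at `α`: for a function holomorphic near `α`, vanishing
to order at least `d`, i.e. all derivatives of order `< d` vanish at `α`. -/
def VanishesToOrder (g : ℂ → ℂ) (α : ℂ) (d : ℕ) : Prop :=
  ∀ i < d, iteratedDeriv i g α = 0

/-- The map `π : M_n(ℂ) → ℂ^n`, `π(A) = (σ_1(A), …, σ_n(A))`, where
`det(tI - A) = ∑_{j=0}^n (-1)^j σ_j(A) t^{n-j}`.  Index `i : Fin n` stands for `j = i+1`. -/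
def piCoef (n : ℕ) (A : Matrix (Fin n) (Fin n) ℂ) : Fin n → ℂ :=
  fun i => (-1 : ℂ) ^ ((i : ℕ) + 1) * (Matrix.charpoly A).coeff (n - ((i : ℕ) + 1))

/-- The spectral ball `Ω_n`: matrices whose eigenvalues (roots of the characteristic
polynomial) all have modulus `< 1`. -/
def SpectralBall (n : ℕ) : Set (Matrix (Fin n) (Fin n) ℂ) :=
  { A | ∀ z ∈ (Matrix.charpoly A).roots, ‖z‖ < 1 }

/-- The symmetrized polydisc `G_n = π(Ω_n)`. -/
def SymPolydisc (n : ℕ) : Set (Fin n → ℂ) := piCoef n '' SpectralBall n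

/-- `P_{[v]}(t) = t^n + ∑_{j=1}^n (-1)^j v_j t^{n-j}`. -/
def Pv (n : ℕ) (v : Fin n → ℂ) : Polynomial ℂ :=
  X ^ n + ∑ i : Fin n, C ((-1 : ℂ) ^ ((i : ℕ) + 1) * v i) * X ^ (n - ((i : ℕ) + 1))

/-- `k`-th derivative of a polynomial with respect to the indeterminate. -/
def polyDeriv (k : ℕ) (P : Polynomial ℂ) : Polynomial ℂ :=
  (fun Q : Polynomial ℂ => Polynomial.derivative Q)^[k] P

/-- A matrix is cyclic (non-derogatory) if some vector has iterates spanning `ℂ^n`. -/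
def IsCyclicMatrix {n : ℕ} (M : Matrix (Fin n) (Fin n) ℂ) : Prop :=
  ∃ v : Fin n → ℂ, Submodule.span ℂ { w : Fin n → ℂ | ∃ k : ℕ, w = (M ^ k).mulVec v } = ⊤

open scoped Classical in
/-- `d_i(B) = 1 + #{ j : m-i+2 ≤ j ≤ m, B_{j-1,j} = 0 }` (1-indexed entries). -/
def dIdx {m : ℕ} (B : Matrix (Fin m) (Fin m) ℂ) (i : ℕ) : ℕ :=
  1 + ((Finset.Icc (m - i + 2) m).filter
      (fun j => ∀ (h1 : j - 2 < m) (h2 : j - 1 < m), B ⟨j - 2, h1⟩ ⟨j - 1, h2⟩ = 0)).card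

open scoped Classical in
/-- A single-eigenvalue Jordan matrix with eigenvalue `lam`: diagonal entries `lam`,
superdiagonal entries `0` or `1`, all other entries `0`, and the sizes of the consecutive
Jordan blocks (delimited by the vanishing superdiagonal entries) nondecreasing.
The list `L` records the consecutive Jordan block sizes; the superdiagonal entry in
(0-indexed) column `j` vanishes exactly when `j` is a proper partial sum of `L`. -/
def IsSingleJordan {m : ℕ} (B : Matrix (Fin m) (Fin m) ℂ) (lam : ℂ) : Prop :=
  (∀ i, B i i = lam) ∧
  (∀ i j : Fin m, (j : ℕ) ≠ (i : ℕ) → (j : ℕ) ≠ (i : ℕ) + 1 → B i j = 0) ∧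
  ∃ L : List ℕ, (∀ x ∈ L, 0 < x) ∧ L.sum = m ∧ L.Pairwise (· ≤ ·) ∧
    ∀ i j : Fin m, (j : ℕ) = (i : ℕ) + 1 →
      B i j = if (∃ t, 0 < t ∧ t < L.length ∧ (L.take t).sum = (j : ℕ)) then 0 else 1

/-- Partial sums `n_t = m_1 + ⋯ + m_t` of block sizes. -/
def nsum {s : ℕ} (m : Fin s → ℕ) (t : ℕ) : ℕ :=
  ∑ j ∈ Finset.univ.filter (fun j : Fin s => (j : ℕ) < t), m j

/-- `A = diag(B_1, …, B_s)` is a block Jordan matrix with single-eigenvalue Jordan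
blocks `B j` of size `m j` and pairwise distinct eigenvalues `lam j`. -/
def IsBlockJordan {n s : ℕ} (m : Fin s → ℕ) (lam : Fin s → ℂ)
    (B : ∀ j : Fin s, Matrix (Fin (m j)) (Fin (m j)) ℂ)
    (A : Matrix (Fin n) (Fin n) ℂ) : Prop :=
  (∑ j, m j) = n ∧ Function.Injective lam ∧ (∀ j, 0 < m j) ∧
  (∀ j, IsSingleJordan (B j) (lam j)) ∧
  (∀ (j : Fin s) (a b : Fin (m j)) (h1 : nsum m (j : ℕ) + (a : ℕ) < n)
      (h2 : nsum m (j : ℕ) + (b : ℕ) < n),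
      A ⟨nsum m (j : ℕ) + (a : ℕ), h1⟩ ⟨nsum m (j : ℕ) + (b : ℕ), h2⟩ = B j a b) ∧
  (∀ (i k : Fin n) (j j' : Fin s), j ≠ j' →
      nsum m (j : ℕ) ≤ (i : ℕ) → (i : ℕ) < nsum m ((j : ℕ) + 1) →
      nsum m (j' : ℕ) ≤ (k : ℕ) → (k : ℕ) < nsum m ((j' : ℕ) + 1) →
      A i k = 0)

/-- The conditions (★) at `α` relative to a block Jordan matrix with data `m, lam, B`:
`(d^k P_{[φ(ζ)]}/dt^k)(λ_j) = O((ζ-α)^{d_{m_j-k}(B_j)})` for `1 ≤ j ≤ s`, `0 ≤ k ≤ m_j - 1`. -/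
def StarConditions {n s : ℕ} (m : Fin s → ℕ) (lam : Fin s → ℂ)
    (B : ∀ j : Fin s, Matrix (Fin (m j)) (Fin (m j)) ℂ)
    (φ : ℂ → Fin n → ℂ) (α : ℂ) : Prop :=
  ∀ (j : Fin s), ∀ k < m j,
    VanishesToOrder (fun ζ => (polyDeriv k (Pv n (φ ζ))).eval (lam j)) α
      (dIdx (B j) (m j - k))

/-- Sum of all monomials of degree `d` in `k` variables (complete homogeneous symmetric sum). -/
def homogSum (k d : ℕ) (x : Fin k → ℂ) : ℂ :=
  ∑ c ∈ Finset.Nat.antidiagonalTuple k d, ∏ i, x i ^ c i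

/-- Divided difference `Δ^k P (x_1, …, x_{k+1}) = ∑_{j≥k} a_j ∑_{i_1+⋯+i_{k+1}=j-k} x^i`. -/
def divDiff (P : Polynomial ℂ) (k : ℕ) (x : Fin (k + 1) → ℂ) : ℂ :=
  ∑ j ∈ Finset.Icc k P.natDegree, P.coeff j * homogSum (k + 1) (j - k) x

/-- The Lempert function of the spectral ball. -/
def lempertOmega (n : ℕ) (A B : Matrix (Fin n) (Fin n) ℂ) : ℝ :=
  sInf { r : ℝ | ∃ α ∈ unitDisc, r = ‖α‖ ∧
    ∃ Φ : ℂ → Matrix (Fin n) (Fin n) ℂ,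
      (∀ i j, DifferentiableOn ℂ (fun ζ => Φ ζ i j) unitDisc) ∧
      Set.MapsTo Φ unitDisc (SpectralBall n) ∧ Φ α = A ∧ Φ 0 = B }

/-- The matrix `B_k^λ(ζ)`. -/
def Bmat (k : ℕ) (lam ζ : ℂ) : Matrix (Fin k) (Fin k) ℂ :=
  Matrix.of fun i j =>
    if (j : ℕ) = (i : ℕ) then lam
    else if (j : ℕ) = (i : ℕ) + 1 then (if (i : ℕ) = k - 2 then 1 else ζ)
    else if (i : ℕ) = k - 1 ∧ (j : ℕ) = 0 then ζ
    else 0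

/-- The block diagonal matrix `diag(B_k^{λ_1}(ζ), B_l^{λ_2}(ζ))` as an `(k+l)×(k+l)` matrix. -/
def BmatPair (k l : ℕ) (lam1 lam2 ζ : ℂ) : Matrix (Fin (k + l)) (Fin (k + l)) ℂ :=
  Matrix.reindex finSumFinEquiv finSumFinEquiv
    (Matrix.fromBlocks (Bmat k lam1 ζ) 0 0 (Bmat l lam2 ζ))

end

/-!
Comparing coefficients of `t ^ j` in `P⁰ = P¹ P²` gives `a⁰_j = ∑_{p+q=j} a¹_p a²_q`, and
vanishing to order `≥ d` at `0` means `analyticOrderAt ≥ d`. Since `k` is nonincreasing, every term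
`a¹_p a²_q` with `p ≤ j` has order `≥ k_p ≥ k_j` once the `a¹` bounds hold, which bounds `a⁰_j`.
Conversely, by strong induction on `j`, `a¹_j a²_0 = a⁰_j - ∑_{p<j} a¹_p a²_{j-p}` has order
`≥ k_j`, and multiplying by `a²_0`, which does not vanish at `0`, does not change the order.
-/

open Filter Finset
open scoped Topology

section AnalyticOrder

variable {𝕜 : Type*} [NontriviallyNormedField 𝕜] {z₀ : 𝕜}

lemma le_analyticOrderAt_finsetSum {E ι : Type*} [NormedAddCommGroup E] [NormedSpace 𝕜 E]
    {s : Finset ι} {f : ι → 𝕜 → E} {n : ℕ∞} (h : ∀ i ∈ s, n ≤ analyticOrderAt (f i) z₀) :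
    n ≤ analyticOrderAt (fun z ↦ ∑ i ∈ s, f i z) z₀ := by
  classical
  induction s using Finset.induction_on with
  | empty => simp [analyticOrderAt_eq_top.mpr (Eventually.of_forall fun _ ↦ rfl)]
  | insert i s hi ih =>
    simp only [Finset.sum_insert hi]
    refine le_trans ?_ (le_analyticOrderAt_add (f := f i) (g := fun z ↦ ∑ i ∈ s, f i z))
    simp only [Finset.forall_mem_insert] at h
    exact le_min h.1 (ih h.2)

variable {f g : 𝕜 → 𝕜}

lemma le_analyticOrderAt_mul_of_le_left (hf : AnalyticAt 𝕜 f z₀) (hg : AnalyticAt 𝕜 g z₀)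
    {n : ℕ∞} (h : n ≤ analyticOrderAt f z₀) : n ≤ analyticOrderAt (f * g) z₀ := by
  rw [analyticOrderAt_mul hf hg]
  exact le_add_right h

lemma analyticOrderAt_mul_of_ne_zero (hf : AnalyticAt 𝕜 f z₀) (hg : AnalyticAt 𝕜 g z₀)
    (hg₀ : g z₀ ≠ 0) : analyticOrderAt (f * g) z₀ = analyticOrderAt f z₀ := by
  rw [analyticOrderAt_mul hf hg, analyticOrderAt_eq_zero.mpr (.inr hg₀), add_zero]

theorem forall_le_analyticOrderAt_iff_of_eventuallyEq_convolution {a b c : ℕ → 𝕜 → 𝕜}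
    {m : ℕ} {k : ℕ → ℕ} (ha : ∀ j < m, AnalyticAt 𝕜 (a j) z₀)
    (hb : ∀ j < m, AnalyticAt 𝕜 (b j) z₀) (hb₀ : b 0 z₀ ≠ 0)
    (hc : ∀ j < m, c j =ᶠ[𝓝 z₀] fun z ↦ ∑ x ∈ antidiagonal j, a x.1 z * b x.2 z)
    (hk : ∀ i j, i ≤ j → j < m → k j ≤ k i) :
    (∀ j < m, (k j : ℕ∞) ≤ analyticOrderAt (c j) z₀) ↔
      ∀ j < m, (k j : ℕ∞) ≤ analyticOrderAt (a j) z₀ := by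
  constructor
  · intro hcord j
    induction j using Nat.strong_induction_on with
    | _ j ih =>
      intro hj
      set rest : 𝕜 → 𝕜 := fun z ↦ ∑ x ∈ (antidiagonal j).erase (j, 0), a x.1 z * b x.2 z
      have hsplit : a j * b 0 =ᶠ[𝓝 z₀] c j - rest := by
        filter_upwards [hc j hj] with z hz
        rw [Pi.sub_apply, hz, ← Finset.add_sum_erase _ _ (by simp : (j, 0) ∈ antidiagonal j)]
        exact (add_sub_cancel_right _ _).symm
      have hrest : (k j : ℕ∞) ≤ analyticOrderAt rest z₀ := by
        refine le_analyticOrderAt_finsetSum fun ⟨p, q⟩ hpq ↦ ?_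
        obtain ⟨hne, hpq⟩ := Finset.mem_erase.mp hpq
        have hp : p < j := by
          rw [HasAntidiagonal.mem_antidiagonal] at hpq
          by_contra! hjp
          exact hne (Prod.ext (by simp; omega) (by simp; omega))
        exact le_analyticOrderAt_mul_of_le_left (ha p (hp.trans hj))
          (hb q (by rw [HasAntidiagonal.mem_antidiagonal] at hpq; omega))
          ((Nat.cast_le.mpr (hk p j hp.le hj)).trans (ih p hp (hp.trans hj)))
      rw [← analyticOrderAt_mul_of_ne_zero (ha j hj) (hb 0 (by omega)) hb₀,
        analyticOrderAt_congr hsplit]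
      exact (le_min (hcord j hj) hrest).trans le_analyticOrderAt_sub
  · intro haord j hj
    rw [analyticOrderAt_congr (hc j hj)]
    refine le_analyticOrderAt_finsetSum fun ⟨p, q⟩ hpq ↦ ?_
    have hpq : p + q = j := HasAntidiagonal.mem_antidiagonal.mp hpq
    exact le_analyticOrderAt_mul_of_le_left (ha p (by omega)) (hb q (by omega))
      ((Nat.cast_le.mpr (hk p j (by omega) hj)).trans (haord p (by omega)))

end AnalyticOrder

lemma vanishesToOrder_iff_natCast_le_analyticOrderAt {g : ℂ → ℂ} {α : ℂ}
    (hg : AnalyticAt ℂ g α) (d : ℕ) :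
    VanishesToOrder g α d ↔ (d : ℕ∞) ≤ analyticOrderAt g α :=
  (natCast_le_analyticOrderAt_iff_iteratedDeriv_eq_zero hg).symm

section PolynomialCoefficients

open Polynomial

lemma coeff_sum_range_C_mul_X_pow {R : Type*} [Semiring R] (n : ℕ) (a : ℕ → R) (i : ℕ) :
    (∑ j ∈ range (n + 1), C (a j) * X ^ j).coeff i = if i ≤ n then a i else 0 := by
  simp [finsetSum_coeff]

lemma eq_sum_antidiagonal_of_forall_eval_eq_mul {R : Type*} [CommRing R] [IsDomain R]
    [Infinite R] {m n : ℕ} {a b c : ℕ → R}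
    (h : ∀ t : R, ∑ j ∈ range (m + n + 1), c j * t ^ j =
      (∑ j ∈ range (m + 1), a j * t ^ j) * ∑ j ∈ range (n + 1), b j * t ^ j)
    {j : ℕ} (hj : j ≤ m) :
    c j = ∑ x ∈ antidiagonal j, a x.1 * if x.2 ≤ n then b x.2 else 0 := by
  have hpoly : ∑ i ∈ range (m + n + 1), C (c i) * X ^ i =
      (∑ i ∈ range (m + 1), C (a i) * X ^ i) * ∑ i ∈ range (n + 1), C (b i) * X ^ i :=
    Polynomial.funext fun t ↦ by simpa [eval_finsetSum] using h t
  have := congrArg (coeff · j) hpoly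
  simp only [coeff_mul, coeff_sum_range_C_mul_X_pow, if_pos (hj.trans (Nat.le_add_right m n))]
    at this
  rw [this]
  refine Finset.sum_congr rfl fun x hx ↦ ?_
  rw [if_pos (by rw [HasAntidiagonal.mem_antidiagonal] at hx; omega)]

end PolynomialCoefficients

theorem statement5_general (ω : Set ℂ) (hω : ω ∈ nhds (0 : ℂ))
    (m1 m2 : ℕ)
    (a0 a1 a2 : ℕ → ℂ → ℂ)
    (ha0 : ∀ j ≤ m1 + m2, DifferentiableOn ℂ (a0 j) ω)
    (ha1 : ∀ j ≤ m1, DifferentiableOn ℂ (a1 j) ω)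
    (ha2 : ∀ j ≤ m2, DifferentiableOn ℂ (a2 j) ω)
    (hprod : ∀ ζ ∈ ω, ∀ t : ℂ,
      (∑ j ∈ Finset.range (m1 + m2 + 1), a0 j ζ * t ^ j) =
        (∑ j ∈ Finset.range (m1 + 1), a1 j ζ * t ^ j) *
        (∑ j ∈ Finset.range (m2 + 1), a2 j ζ * t ^ j))
    (ha20 : a2 0 0 ≠ 0)
    (kk : ℕ → ℕ)
    (hkmono : ∀ i j, i ≤ j → j < m1 → kk j ≤ kk i) :
    (∀ j < m1, VanishesToOrder (a0 j) 0 (kk j)) ↔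
      (∀ j < m1, VanishesToOrder (a1 j) 0 (kk j)) := by
  set b : ℕ → ℂ → ℂ := fun q ζ ↦ if q ≤ m2 then a2 q ζ else 0
  have hb : ∀ q, AnalyticAt ℂ (b q) 0 := fun q ↦ by
    by_cases hq : q ≤ m2
    · simpa [b, hq] using (ha2 q hq).analyticAt hω
    · simpa [b, hq] using analyticAt_const
  have hconv : ∀ j < m1, a0 j =ᶠ[𝓝 0] fun ζ ↦ ∑ x ∈ antidiagonal j, a1 x.1 ζ * b x.2 ζ :=
    fun j hj ↦ eventually_of_mem hω fun ζ hζ ↦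
      eq_sum_antidiagonal_of_forall_eval_eq_mul (hprod ζ hζ) hj.le
  have hord0 : ∀ j < m1,
      VanishesToOrder (a0 j) 0 (kk j) ↔ (kk j : ℕ∞) ≤ analyticOrderAt (a0 j) 0 :=
    fun j hj ↦ vanishesToOrder_iff_natCast_le_analyticOrderAt ((ha0 j (by omega)).analyticAt hω) _
  have hord1 : ∀ j < m1,
      VanishesToOrder (a1 j) 0 (kk j) ↔ (kk j : ℕ∞) ≤ analyticOrderAt (a1 j) 0 :=
    fun j hj ↦ vanishesToOrder_iff_natCast_le_analyticOrderAt ((ha1 j hj.le).analyticAt hω) _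
  rw [forall₂_congr hord0, forall₂_congr hord1]
  exact forall_le_analyticOrderAt_iff_of_eventuallyEq_convolution
    (fun j hj ↦ (ha1 j hj.le).analyticAt hω) (fun q _ ↦ hb q) (by simpa [b] using ha20)
    hconv hkmono

/-- vanishing orders of the low-degree coefficients pass between a product
polynomial `P⁰ = P¹·P²` and the factor `P¹`, when `P¹_0(t) = t^{m_1}` and `P²_0(0) ≠ 0`. -/
theorem statement5 (ω : Set ℂ) (hω : ω ∈ nhds (0 : ℂ))
    (m1 m2 : ℕ) (hm1 : 1 ≤ m1) (hm2 : 1 ≤ m2)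
    (a0 a1 a2 : ℕ → ℂ → ℂ)
    (ha0 : ∀ j ≤ m1 + m2, DifferentiableOn ℂ (a0 j) ω)
    (ha1 : ∀ j ≤ m1, DifferentiableOn ℂ (a1 j) ω)
    (ha2 : ∀ j ≤ m2, DifferentiableOn ℂ (a2 j) ω)
    (hprod : ∀ ζ ∈ ω, ∀ t : ℂ,
      (∑ j ∈ Finset.range (m1 + m2 + 1), a0 j ζ * t ^ j) =
        (∑ j ∈ Finset.range (m1 + 1), a1 j ζ * t ^ j) *
        (∑ j ∈ Finset.range (m2 + 1), a2 j ζ * t ^ j))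
    (hP10 : ∀ t : ℂ, (∑ j ∈ Finset.range (m1 + 1), a1 j 0 * t ^ j) = t ^ m1)
    (ha20 : a2 0 0 ≠ 0)
    (kk : ℕ → ℕ) (hkpos : ∀ j < m1, 0 < kk j)
    (hkmono : ∀ i j, i ≤ j → j < m1 → kk j ≤ kk i) :
    (∀ j < m1, VanishesToOrder (a0 j) 0 (kk j)) ↔
      (∀ j < m1, VanishesToOrder (a1 j) 0 (kk j)) :=
  statement5_general ω hω m1 m2 a0 a1 a2 ha0 ha1 ha2 hprod ha20 kk hkmono
end

section
/- Let n ≥ 1, v = (v_1,…,v_n) ∈ ℂ^n, x_1,…,x_{n−1} ∈ ℂ, and f_2,…,f_n ∈ ℂ \ {0}. Define Φ ∈ M_n(ℂ) by: Φ_{ii} = x_i for 1 ≤ i ≤ n−1; Φ_{i,i+1} = f_{i+1} for 1 ≤ i ≤ n−1; Φ_{nℓ} = −Δ^{ℓ−1}P_{[v]}(x_1,…,x_ℓ)/(f_{ℓ+1}⋯f_n) for 1 ≤ ℓ ≤ n−1; Φ_{nn} = v_1 − (x_1 + ⋯ + x_{n−1}); and Φ_{ij} = 0 for all other pairs (i,j).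 Then det(tI_n − Φ) = P_{[v]}(t) as polynomials in t; equivalently, π(Φ) = v. -/
open Polynomial

/-!
Expand `det (t - Φ)` along the last row. Deleting column `ℓ` leaves a block diagonal minor: an
upper triangular block with diagonal `t - x₁, …, t - x_{ℓ-1}` and a lower triangular one with
diagonal `-f_{ℓ+1}, …, -f_n`. The `f`'s cancel the denominators in the last row, so with
`P = P_[v]`
`det (t - Φ) = ∑_{ℓ<n} Δ^{ℓ-1}P(x₁, …, x_ℓ) ∏_{i<ℓ} (t - x_i) + (t - v₁ + ∑ x_i) ∏_{i<n} (t - x_i)`.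
As `P` is monic with `t^{n-1}`-coefficient `-v₁`, the last factor is `Δ^{n-1} P(t, x₁, …, x_{n-1})`,
and the right-hand side is Newton's interpolation formula for `P(t)` with nodes `x₁, …, x_{n-1}`.
-/

section DividedDifferences
open Finset

lemma homogSum_zero_right (k : ℕ) (x : Fin k → ℂ) : homogSum k 0 x = 1 := by
  simp [homogSum, Nat.antidiagonalTuple_zero_right]

lemma homogSum_zero_left_succ (d : ℕ) (x : Fin 0 → ℂ) : homogSum 0 (d + 1) x = 0 := by
  simp [homogSum]

lemma homogSum_cons (k d : ℕ) (a : ℂ) (y : Fin k → ℂ) :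
    homogSum (k + 1) d (Fin.cons a y) = ∑ p ∈ antidiagonal d, a ^ p.1 * homogSum k p.2 y := by
  simp only [homogSum, mul_sum]
  rw [sum_sigma']
  refine sum_nbij' (fun c => ⟨(c 0, d - c 0), Fin.tail c⟩) (fun c => Fin.cons c.1.1 c.2)
    ?_ ?_ ?_ ?_ ?_
  · intro c hc
    simp only [Nat.mem_antidiagonalTuple, Fin.sum_univ_succ] at hc
    simp [Nat.mem_antidiagonalTuple, Fin.tail]
    omega
  · rintro ⟨⟨i, j⟩, c⟩ hc
    simp only [mem_sigma, HasAntidiagonal.mem_antidiagonal, Nat.mem_antidiagonalTuple] at hc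
    simp [Nat.mem_antidiagonalTuple, Fin.sum_univ_succ, hc.2, hc.1]
  · intro c _
    simp
  · rintro ⟨⟨i, j⟩, c⟩ hc
    simp only [mem_sigma, HasAntidiagonal.mem_antidiagonal] at hc
    simp only [Fin.cons_zero, Fin.tail_cons, Sigma.mk.injEq, Prod.mk.injEq, heq_eq_eq, true_and,
      and_true]
    omega
  · intro c _
    simp [Fin.prod_univ_succ, Fin.tail]

lemma homogSum_cons_succ (k d : ℕ) (a : ℂ) (y : Fin k → ℂ) :
    homogSum (k + 1) (d + 1) (Fin.cons a y) =
      a * homogSum (k + 1) d (Fin.cons a y) + homogSum k (d + 1) y := by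
  rw [homogSum_cons, homogSum_cons, Nat.sum_antidiagonal_succ, mul_sum, add_comm]
  simp only [pow_succ', mul_assoc, pow_zero, one_mul]

lemma homogSum_one_right (k : ℕ) (x : Fin k → ℂ) : homogSum k 1 x = ∑ i, x i := by
  induction k with
  | zero => simp [homogSum]
  | succ k ih =>
    rw [← Fin.cons_self_tail x, homogSum_cons_succ, homogSum_zero_right, ih, Fin.sum_cons]
    ring

lemma homogSum_single (d : ℕ) (t : ℂ) (y : Fin 0 → ℂ) :
    homogSum 1 d (Fin.cons t y) = t ^ d := by
  induction d with
  | zero => rw [homogSum_zero_right, pow_zero]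
  | succ d ih => rw [homogSum_cons_succ, ih, homogSum_zero_left_succ, pow_succ', add_zero]

lemma homogSum_cons_sub_cons (k d : ℕ) (t s : ℂ) (y : Fin k → ℂ) :
    homogSum (k + 1) (d + 1) (Fin.cons t y) - homogSum (k + 1) (d + 1) (Fin.cons s y) =
      (t - s) * homogSum (k + 2) d (Fin.cons t (Fin.cons s y)) := by
  induction d with
  | zero =>
    simp only [homogSum_cons_succ, homogSum_zero_right]
    ring
  | succ d ih =>
    rw [homogSum_cons_succ k (d + 1), homogSum_cons_succ k (d + 1),
      homogSum_cons_succ (k + 1) d]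
    linear_combination t * ih

lemma homogSum_comp_perm (k d : ℕ) (x : Fin k → ℂ) (e : Equiv.Perm (Fin k)) :
    homogSum k d (x ∘ e) = homogSum k d x := by
  refine sum_nbij' (fun c => c ∘ e.symm) (fun c => c ∘ e) ?_ ?_ ?_ ?_ ?_
  · intro c hc
    simpa [Nat.mem_antidiagonalTuple, Equiv.sum_comp] using hc
  · intro c hc
    simpa [Nat.mem_antidiagonalTuple, Equiv.sum_comp] using hc
  · intro c _; ext; simp
  · intro c _; ext; simp
  · intro c _
    exact (Equiv.prod_comp e.symm _).symm.trans (by simp)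

lemma divDiff_comp_perm (P : ℂ[X]) (k : ℕ) (x : Fin (k + 1) → ℂ)
    (e : Equiv.Perm (Fin (k + 1))) :
    divDiff P k (x ∘ e) = divDiff P k x := by
  simp only [divDiff, homogSum_comp_perm]

lemma divDiff_zero (P : ℂ[X]) (t : ℂ) (y : Fin 0 → ℂ) :
    divDiff P 0 (Fin.cons t y) = P.eval t := by
  rw [divDiff, eval_eq_sum_range, Nat.range_succ_eq_Icc_zero]
  exact sum_congr rfl fun j _ => congrArg _ (homogSum_single j t y)

lemma divDiff_cons_eq_add (P : ℂ[X]) (k : ℕ) (t s : ℂ) (y : Fin k → ℂ) :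
    divDiff P k (Fin.cons t y) =
      divDiff P k (Fin.cons s y) + (t - s) * divDiff P (k + 1) (Fin.cons t (Fin.cons s y)) := by
  rw [← sub_eq_iff_eq_add', divDiff, divDiff, divDiff, ← sum_sub_distrib, mul_sum,
    ← sum_subset (Icc_subset_Icc_left k.le_succ)]
  · refine sum_congr rfl fun j hj => ?_
    obtain ⟨d, rfl⟩ : ∃ d, j = k + 1 + d := ⟨j - (k + 1), by grind⟩
    rw [show k + 1 + d - k = d + 1 by omega, show k + 1 + d - (k + 1) = d by omega, ← mul_sub,
      homogSum_cons_sub_cons]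
    ring
  · intro j hj hj'
    obtain rfl : j = k := by grind
    simp [homogSum_zero_right]

lemma divDiff_of_natDegree_eq_succ (P : ℂ[X]) {k : ℕ} (hP : P.natDegree = k + 1)
    (y : Fin (k + 1) → ℂ) : divDiff P k y = P.coeff k + P.coeff (k + 1) * ∑ i, y i := by
  rw [divDiff, hP, ← insert_Icc_add_one_left_eq_Icc (by omega : k ≤ k + 1), Icc_self,
    sum_pair (by omega), Nat.sub_self, homogSum_zero_right, Nat.add_sub_cancel_left,
    homogSum_one_right, mul_one]

/-- Newton's interpolation formula with nodes `x 1, x 2, …` and remainder term. The remainder lists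
the nodes in reverse order, so that the induction step only prepends one. -/
theorem eval_eq_sum_divDiff_mul_prod_add (P : ℂ[X]) (x : ℕ → ℂ) (t : ℂ) (K : ℕ) :
    P.eval t =
      ∑ j ∈ range K,
          divDiff P j (fun i : Fin (j + 1) => x (i + 1)) * ∏ i ∈ range j, (t - x (i + 1))
        + divDiff P K (Fin.cons t fun i : Fin K => x (K - i)) * ∏ i ∈ range K, (t - x (i + 1)) := by
  induction K with
  | zero => simp [divDiff_zero]
  | succ K ih =>
    have hcons : (Fin.cons (x (K + 1)) fun i : Fin K => x (K - i)) =
        fun i : Fin (K + 1) => x (K + 1 - i) := by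
      ext i
      cases i using Fin.cases <;> simp
    have hrev : (fun i : Fin (K + 1) => x (K + 1 - i)) =
        (fun i : Fin (K + 1) => x (i + 1)) ∘ Fin.revPerm := by
      ext i
      simp only [Function.comp_apply, Fin.revPerm_apply, Fin.val_rev]
      congr 1
      omega
    rw [ih, divDiff_cons_eq_add P K t (x (K + 1)), hcons, hrev, divDiff_comp_perm, ← hrev,
      sum_range_succ, prod_range_succ]
    ring

end DividedDifferences

section BidiagonalRows

open Finset

variable {R : Type*} [CommRing R]

lemma Fin.val_succAbove_eq_ite {m : ℕ} (p : Fin (m + 1)) (j : Fin m) :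
    (p.succAbove j : ℕ) = if (j : ℕ) < p then (j : ℕ) else j + 1 := by
  split_ifs with h
  · rw [Fin.succAbove_of_castSucc_lt _ _ (by simpa [Fin.lt_def] using h), Fin.val_castSucc]
  · rw [Fin.succAbove_of_le_castSucc _ _ (by simpa [Fin.le_def] using h), Fin.val_succ]

lemma det_submatrix_castSucc_succAbove_of_bidiagonal_rows {m : ℕ} (a b : ℕ → R)
    (N : Matrix (Fin (m + 1)) (Fin (m + 1)) R)
    (hN : ∀ (i : Fin m) (j : Fin (m + 1)),
      N i.castSucc j = if (j : ℕ) = i then a i else if (j : ℕ) = i + 1 then b i else 0)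
    (p : Fin (m + 1)) :
    (N.submatrix Fin.castSucc p.succAbove).det = ∏ i : Fin m, if (i : ℕ) < p then a i else b i := by
  have hM : ∀ i j : Fin m, N.submatrix Fin.castSucc p.succAbove i j =
      if (if (j : ℕ) < p then (j : ℕ) else j + 1) = i then a i
      else if (if (j : ℕ) < p then (j : ℕ) else j + 1) = i + 1 then b i else 0 := by
    intro i j
    rw [Matrix.submatrix_apply, hN, Fin.val_succAbove_eq_ite]
  rw [Matrix.twoBlockTriangular_det _ (fun i : Fin m => (i : ℕ) < p) (fun i hi j hj => by
        rw [hM]; split_ifs <;> first | rfl | omega),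
    Matrix.det_of_isUpperTriangular (fun i j hji => by
        rw [Matrix.toSquareBlockProp_def, Matrix.of_apply, hM]
        have : (j : ℕ) < i := hji
        split_ifs <;> first | rfl | omega),
    Matrix.det_of_isLowerTriangular _ (fun i j hij => by
        rw [Matrix.toSquareBlockProp_def, Matrix.of_apply, hM]
        have : (i : ℕ) < j := hij
        split_ifs <;> first | rfl | omega)]
  rw [← Fintype.prod_subtype_mul_prod_subtype (fun i : Fin m => (i : ℕ) < p)]
  congr 1 <;> refine Fintype.prod_congr _ _ fun i => ?_ <;>
    simp only [Matrix.toSquareBlockProp_def, Matrix.of_apply, hM] <;> simp [i.2]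

lemma det_eq_sum_of_bidiagonal_rows {m : ℕ} (a b : ℕ → R)
    (N : Matrix (Fin (m + 1)) (Fin (m + 1)) R)
    (hN : ∀ (i : Fin m) (j : Fin (m + 1)),
      N i.castSucc j = if (j : ℕ) = i then a i else if (j : ℕ) = i + 1 then b i else 0) :
    N.det = ∑ p : Fin (m + 1),
      (-1) ^ (m + (p : ℕ)) * N (Fin.last m) p * ∏ i : Fin m, if (i : ℕ) < p then a i else b i := by
  rw [Matrix.det_succ_row N (Fin.last m)]
  simp only [Fin.succAbove_last, Fin.val_last,
    det_submatrix_castSucc_succAbove_of_bidiagonal_rows a b N hN]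

lemma prod_ite_lt_eq_prod_range_mul_prod_Ico {m p : ℕ} (hp : p ≤ m) (a b : ℕ → R) :
    ∏ i : Fin m, (if (i : ℕ) < p then a i else b i) =
      (∏ i ∈ range p, a i) * ∏ i ∈ Ico p m, b i := by
  rw [Fin.prod_univ_eq_prod_range (fun i => if i < p then a i else b i),
    ← prod_range_mul_prod_Ico _ hp]
  congr 1 <;> refine prod_congr rfl fun i hi => ?_
  · rw [if_pos (mem_range.mp hi)]
  · rw [if_neg (not_lt.mpr (mem_Ico.mp hi).1)]

lemma eval_charpoly_of_bidiagonal_rows {m : ℕ} (d e : ℕ → R)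
    (Φ : Matrix (Fin (m + 1)) (Fin (m + 1)) R)
    (hΦ : ∀ (i : Fin m) (j : Fin (m + 1)),
      Φ i.castSucc j = if (j : ℕ) = i then d i else if (j : ℕ) = i + 1 then e i else 0) (t : R) :
    Φ.charpoly.eval t =
      ∑ p : Fin m,
          -Φ (Fin.last m) p.castSucc * (∏ i ∈ range p, (t - d i)) * ∏ i ∈ Ico (p : ℕ) m, e i
        + (t - Φ (Fin.last m) (Fin.last m)) * ∏ i ∈ range m, (t - d i) := by
  have hrows : ∀ (i : Fin m) (j : Fin (m + 1)), (Matrix.scalar (Fin (m + 1)) t - Φ) i.castSucc j =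
      if (j : ℕ) = i then t - d i else if (j : ℕ) = i + 1 then -e i else 0 := by
    intro i j
    simp only [Matrix.sub_apply, Matrix.scalar_apply, Matrix.diagonal_apply, hΦ, Fin.ext_iff,
      Fin.val_castSucc]
    split_ifs <;> first | (exfalso; omega) | ring
  rw [Matrix.eval_charpoly,
    det_eq_sum_of_bidiagonal_rows (fun i => t - d i) (fun i => -e i) _ hrows,
    Fin.sum_univ_castSucc]
  congr 1
  · refine sum_congr rfl fun p _ => ?_
    have hsign : (-1 : R) ^ (m + (p : ℕ)) * (-1) ^ (m - p) = 1 := by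
      rw [← pow_add, show m + (p : ℕ) + (m - p) = 2 * m by omega, pow_mul, neg_one_sq, one_pow]
    rw [Fin.val_castSucc,
      prod_ite_lt_eq_prod_range_mul_prod_Ico p.2.le (fun i => t - d i) (fun i => -e i), prod_neg,
      Nat.card_Ico, Matrix.sub_apply, Matrix.scalar_apply,
      Matrix.diagonal_apply_ne _ (Fin.castSucc_lt_last p).ne']
    linear_combination
      (-Φ (Fin.last m) p.castSucc * (∏ i ∈ range p, (t - d i)) * ∏ i ∈ Ico (p : ℕ) m, e i) * hsign
  · rw [Fin.val_last,
      prod_ite_lt_eq_prod_range_mul_prod_Ico le_rfl (fun i => t - d i) (fun i => -e i), Ico_self,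
      prod_empty, ← two_mul, pow_mul, neg_one_sq, one_pow]
    simp [Matrix.scalar_apply]

end BidiagonalRows

section Pv
open Finset

lemma degree_Pv_sum_lt (n : ℕ) (v : Fin n → ℂ) :
    (∑ i : Fin n, C ((-1 : ℂ) ^ ((i : ℕ) + 1) * v i) * X ^ (n - ((i : ℕ) + 1))).degree <
      (n : WithBot ℕ) := by
  refine (degree_sum_le _ _).trans_lt ((Finset.sup_lt_iff (WithBot.bot_lt_coe n)).2 fun i _ => ?_)
  exact (degree_C_mul_X_pow_le _ _).trans_lt (Nat.cast_lt.2 (by have := i.2; omega))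

lemma monic_Pv (n : ℕ) (v : Fin n → ℂ) : (Pv n v).Monic :=
  monic_X_pow_add (degree_Pv_sum_lt n v)

lemma natDegree_Pv (n : ℕ) (v : Fin n → ℂ) : (Pv n v).natDegree = n := by
  rw [Pv, natDegree_add_eq_left_of_degree_lt (by rw [degree_X_pow]; exact degree_Pv_sum_lt n v),
    natDegree_X_pow]

lemma coeff_Pv_self (n : ℕ) (v : Fin n → ℂ) : (Pv n v).coeff n = 1 := by
  simpa only [natDegree_Pv] using (monic_Pv n v).coeff_natDegree

lemma coeff_Pv_pred (m : ℕ) (v : Fin (m + 1) → ℂ) : (Pv (m + 1) v).coeff m = -v 0 := by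
  rw [Pv, coeff_add, coeff_X_pow, if_neg (by omega), finsetSum_coeff, zero_add,
    sum_eq_single (0 : Fin (m + 1))]
  · simp
  · intro i _ hi
    have : (i : ℕ) ≠ 0 := fun h => hi (Fin.ext h)
    rw [coeff_C_mul, coeff_X_pow, if_neg (by omega), mul_zero]
  · simp

lemma sum_fin_sub_eq_sum_Icc (x : ℕ → ℂ) (m : ℕ) :
    ∑ i : Fin m, x (m - i) = ∑ r ∈ Icc 1 m, x r := by
  rw [Fin.sum_univ_eq_sum_range (fun i => x (m - i)), ← sum_range_reflect, range_eq_Ico,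
    ← Ico_add_one_right_eq_Icc, ← sum_Ico_add' x 0 m 1]
  exact sum_congr rfl fun i hi => congrArg x (by grind)

end Pv

/-- Proposition 4.4: the characteristic polynomial of the "lifting formula"
matrix `Φ` equals `P_{[v]}`, i.e. `π(Φ) = v`. -/
theorem statement10 (n : ℕ) (hn : 1 ≤ n) (v : Fin n → ℂ) (x f : ℕ → ℂ)
    (hf : ∀ i, 2 ≤ i → i ≤ n → f i ≠ 0)
    (Φ : Matrix (Fin n) (Fin n) ℂ)
    (hΦ : ∀ i j : Fin n, Φ i j =
      if (i : ℕ) + 1 < n then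
        (if (j : ℕ) = (i : ℕ) then x ((i : ℕ) + 1)
         else if (j : ℕ) = (i : ℕ) + 1 then f ((i : ℕ) + 2) else 0)
      else
        (if (j : ℕ) + 1 < n then
          -divDiff (Pv n v) (j : ℕ) (fun t : Fin ((j : ℕ) + 1) => x ((t : ℕ) + 1)) /
            ∏ r ∈ Finset.Icc ((j : ℕ) + 2) n, f r
         else v ⟨0, hn⟩ - ∑ r ∈ Finset.Icc 1 (n - 1), x r)) :
    Matrix.charpoly Φ = Pv n v := by
  obtain ⟨m, rfl⟩ : ∃ m, n = m + 1 := ⟨n - 1, by omega⟩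
  have hrows : ∀ (i : Fin m) (j : Fin (m + 1)), Φ i.castSucc j =
      if (j : ℕ) = i then x (i + 1) else if (j : ℕ) = i + 1 then f (i + 2) else 0 := fun i j => by
    rw [hΦ, if_pos (by simp), Fin.val_castSucc]
  refine Polynomial.funext fun t => ?_
  rw [eval_charpoly_of_bidiagonal_rows (fun i => x (i + 1)) (fun i => f (i + 2)) Φ hrows,
    eval_eq_sum_divDiff_mul_prod_add (Pv (m + 1) v) x t m,
    divDiff_of_natDegree_eq_succ _ (natDegree_Pv (m + 1) v), coeff_Pv_self, coeff_Pv_pred,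
    Fin.sum_cons, sum_fin_sub_eq_sum_Icc,
    ← Fin.sum_univ_eq_sum_range (fun j => divDiff (Pv (m + 1) v) j
      (fun i : Fin (j + 1) => x (i + 1)) * ∏ i ∈ Finset.range j, (t - x (i + 1)))]
  congr 1
  · refine Finset.sum_congr rfl fun p _ => ?_
    have hshift :
        ∏ i ∈ Finset.Ico (p : ℕ) m, f (i + 2) = ∏ r ∈ Finset.Icc ((p : ℕ) + 2) (m + 1), f r := by
      rw [Finset.prod_Ico_add', ← Finset.Ico_add_one_right_eq_Icc]
      rfl
    have hF : ∏ r ∈ Finset.Icc ((p : ℕ) + 2) (m + 1), f r ≠ 0 :=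
      Finset.prod_ne_zero_iff.2 fun r hr => by
        rw [Finset.mem_Icc] at hr
        exact hf r (by omega) hr.2
    rw [hΦ, if_neg (by simp), if_pos (by simp), Fin.val_castSucc, hshift]
    field_simp
  · rw [hΦ, if_neg (by simp), if_neg (by simp), add_tsub_cancel_right,
      show (⟨0, hn⟩ : Fin (m + 1)) = 0 from rfl]
    ring
end

section
/- Let k, l ≥ 3 be integers, n = k + l, let λ_1 ≠ λ_2 be points of D, let ε > 0 be small enough that the map φ : D → ℂ^n, φ(ζ) := π(diag(B_k^{λ_1}(εζ), B_l^{λ_2}(εζ))), takes its values in G_n. Let A := diag(B_k^{λ_1}(0), B_l^{λ_2}(0)) and let A′ be its modified Jordan form. Then there do not exist holomorphic functions f_2, …, f_n and φ_{1,1} on D such that: none of the f_i is identically zero; f_i(0) = A′_{i−1,i} for 2 ≤ i ≤ n; φ_{1,1}(0) = A′_{1,1} = λ_1; and the function ζ ↦ −P_{[φ(ζ)]}(φ_{1,1}(ζ))/(f_2(ζ)⋯f_n(ζ)) extends holomorphically across its singularities with value 0 at ζ = 0. (In particular, for n ≥ 6 the lifting formula of the paper's Proposition 4.4, which requires exactly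 these conditions at a prescribed point, cannot in general interpolate a prescribed derogatory matrix.) -/
open Polynomial

/-!
`B_k^λ(ζ) - λ` is a weighted cyclic shift, so only the identity and the cycle `i ↦ i + 1`
contribute to the Leibniz expansion of its characteristic polynomial, which gives
`P_{[φ(ζ)]}(t) = ((t - λ₁)^k - (εζ)^{k-1}) ((t - λ₂)^l - (εζ)^{l-1})`.
As `φ₁₁(0) = λ₁ ≠ λ₂`, the function `ζ ↦ P_{[φ(ζ)]}(φ₁₁(ζ))` vanishes at `0` to order exactly
`k - 1`. On the other hand all superdiagonal entries of `A'` vanish except three, so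
`f₂ ⋯ fₙ` vanishes at `0` to order at least `n - 4`, and `h(0) = 0` adds one more.
Since `P_{[φ]}(φ₁₁) = -h f₂ ⋯ fₙ` near `0`, this forces `k - 1 ≥ k + l - 3`, i.e. `l ≤ 2`.
-/

open Filter Topology

theorem Equiv.Perm.eq_one_or_eq_of_forall_apply_eq_or_eq {ι : Type*} [Fintype ι] [DecidableEq ι]
    {c σ : Equiv.Perm ι} (hc : c.IsCycle) (hsupp : c.support = Finset.univ)
    (hσ : ∀ i, σ i = i ∨ σ i = c i) : σ = 1 ∨ σ = c := by
  refine or_iff_not_imp_left.2 fun hσ1 => ?_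
  obtain ⟨x, hx⟩ : ∃ x, σ x ≠ x := by
    by_contra! h
    exact hσ1 (Equiv.ext h)
  have hmoved (y : ι) : c y ≠ y := Equiv.Perm.mem_support.1 (hsupp ▸ Finset.mem_univ y)
  have hstep (y : ι) (hy : σ y = c y) : σ (c y) = c (c y) :=
    (hσ (c y)).resolve_left fun h => hmoved y (σ.injective (h.trans hy.symm))
  have hpow (n : ℕ) : σ ((c ^ n) x) = c ((c ^ n) x) := by
    induction n with
    | zero => exact (hσ x).resolve_left hx
    | succ n ih => rw [pow_succ', Equiv.Perm.mul_apply]; exact hstep _ ih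
  ext y
  obtain ⟨n, rfl⟩ := hc.exists_pow_eq (hmoved x) (hmoved y)
  rw [hpow]

theorem Matrix.det_eq_prod_diag_add_sign_smul_prod_cycle {R ι : Type*} [CommRing R] [Fintype ι]
    [DecidableEq ι] (M : Matrix ι ι R) {c : Equiv.Perm ι} (hc : c.IsCycle)
    (hsupp : c.support = Finset.univ) (hM : ∀ i j, j ≠ i → j ≠ c i → M i j = 0) :
    M.det = ∏ i, M i i + Equiv.Perm.sign c • ∏ i, M i (c i) := by
  rw [← det_transpose, det_apply, Fintype.sum_eq_add 1 c hc.ne_one.symm]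
  · simp
  · rintro σ ⟨hσ1, hσc⟩
    obtain ⟨i, hi, hci⟩ : ∃ i, σ i ≠ i ∧ σ i ≠ c i := by
      by_contra! h
      exact (Equiv.Perm.eq_one_or_eq_of_forall_apply_eq_or_eq hc hsupp
        fun i => or_iff_not_imp_left.2 (h i)).elim hσ1 hσc
    rw [Finset.prod_eq_zero (Finset.mem_univ i) (hM i (σ i) hi hci), smul_zero]

theorem Bmat_apply_finRotate (m : ℕ) (lam z : ℂ) (i : Fin (m + 2)) :
    Bmat (m + 2) lam z i (finRotate (m + 2) i) = if (i : ℕ) = m then 1 else z := by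
  rcases Fin.eq_castSucc_or_eq_last i with ⟨i, rfl⟩ | rfl <;> simp [Bmat]

theorem Bmat_eq_zero_of_ne_of_ne_finRotate (m : ℕ) (lam z : ℂ) (i j : Fin (m + 2))
    (hji : j ≠ i) (hjc : j ≠ finRotate (m + 2) i) : Bmat (m + 2) lam z i j = 0 := by
  have h1 : (j : ℕ) ≠ i := Fin.val_ne_of_ne hji
  have h2 : (j : ℕ) ≠ (finRotate _ i : ℕ) := Fin.val_ne_of_ne hjc
  simp only [coe_finRotate, Fin.ext_iff, Fin.val_last] at h2
  simp only [Bmat, Matrix.of_apply, if_neg h1]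
  split_ifs at h2 ⊢ <;> first | rfl | omega

theorem charpoly_Bmat (k : ℕ) (hk : 2 ≤ k) (lam z : ℂ) :
    (Bmat k lam z).charpoly = (X - C lam) ^ k - C (z ^ (k - 1)) := by
  obtain ⟨m, rfl⟩ : ∃ m, k = m + 2 := ⟨k - 2, by omega⟩
  have hmoved (i : Fin (m + 2)) : finRotate (m + 2) i ≠ i :=
    Equiv.Perm.mem_support.1 (support_finRotate ▸ Finset.mem_univ i)
  rw [Matrix.charpoly, Matrix.det_eq_prod_diag_add_sign_smul_prod_cycle _ isCycle_finRotate
    support_finRotate]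
  · have hdiag (i : Fin (m + 2)) : Bmat (m + 2) lam z i i = lam := by simp [Bmat]
    have hcycle : ∏ i : Fin (m + 2), (if (i : ℕ) = m then 1 else z) = z ^ (m + 1) := by
      rw [Fin.prod_univ_castSucc, Fin.prod_univ_castSucc]
      simp [Finset.prod_congr rfl fun (i : Fin m) _ => if_neg i.isLt.ne, pow_succ]
    simp only [Matrix.charmatrix_apply_eq, Matrix.charmatrix_apply_ne _ _ _ (hmoved _).symm,
      Bmat_apply_finRotate, sign_finRotate, hdiag, Finset.prod_neg, ← map_prod, hcycle,
      Finset.prod_const, Finset.card_univ, Fintype.card_fin, Units.smul_def, zsmul_eq_mul,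
      show m + 2 - 1 = m + 1 by omega]
    push_cast
    rw [← mul_assoc, ← pow_add, (show Odd (m + 1 + (m + 2)) from ⟨m + 1, by ring⟩).neg_one_pow]
    ring
  · intro i j hji hjc
    rw [Matrix.charmatrix_apply_ne _ _ _ hji.symm,
      Bmat_eq_zero_of_ne_of_ne_finRotate m lam z i j hji hjc, map_zero, neg_zero]

theorem Pv_piCoef (n : ℕ) (A : Matrix (Fin n) (Fin n) ℂ) : Pv n (piCoef n A) = A.charpoly := by
  have hsign (i : ℕ) : (-1 : ℂ) ^ (i + 1) * (-1) ^ (i + 1) = 1 := by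
    rw [← pow_add, ← two_mul, pow_mul, neg_one_sq, one_pow]
  conv_rhs => rw [A.charpoly_monic.as_sum, A.charpoly_natDegree_eq_dim, Fintype.card_fin]
  simp only [Pv, piCoef, ← mul_assoc, hsign, one_mul]
  rw [Fin.sum_univ_eq_sum_range (fun i => C (A.charpoly.coeff (n - (i + 1))) * X ^ (n - (i + 1))),
    ← Finset.sum_range_reflect]
  refine congrArg _ (Finset.sum_congr rfl fun j hj => ?_)
  rw [show n - (n - 1 - j + 1) = j by grind]

theorem eval_Pv_piCoef_BmatPair {k l : ℕ} (hk : 2 ≤ k) (hl : 2 ≤ l) (a b z t : ℂ) :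
    (Pv (k + l) (piCoef (k + l) (BmatPair k l a b z))).eval t =
      ((t - a) ^ k - z ^ (k - 1)) * ((t - b) ^ l - z ^ (l - 1)) := by
  rw [Pv_piCoef, BmatPair, Matrix.charpoly_reindex, Matrix.charpoly_fromBlocks_zero₂₁,
    charpoly_Bmat k hk, charpoly_Bmat l hl]
  simp

theorem BmatPair_zero_apply_of_val_eq_add_one {k l : ℕ} (a b : ℂ) (i j : Fin (k + l))
    (hij : (j : ℕ) = i + 1) (hik : (i : ℕ) ≠ k - 2) (hil : (i : ℕ) ≠ k + l - 2) :
    BmatPair k l a b 0 i j = 0 := by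
  obtain ⟨p, hp⟩ := i
  obtain ⟨_, hp1⟩ := j
  simp only at hij hik hil
  subst hij
  rw [BmatPair, Matrix.reindex_apply, Matrix.submatrix_apply]
  rcases lt_trichotomy (p + 1) k with h | rfl | h
  · have h1 : (⟨p, hp⟩ : Fin (k + l)) = Fin.castAdd l ⟨p, by omega⟩ := rfl
    have h2 : (⟨p + 1, hp1⟩ : Fin (k + l)) = Fin.castAdd l ⟨p + 1, h⟩ := rfl
    rw [h1, h2, finSumFinEquiv_symm_apply_castAdd, finSumFinEquiv_symm_apply_castAdd]
    simp [Bmat]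
    omega
  · have h1 : (⟨p, hp⟩ : Fin (p + 1 + l)) = Fin.castAdd l (Fin.last p) := rfl
    have h2 : (⟨p + 1, hp1⟩ : Fin (p + 1 + l)) = Fin.natAdd (p + 1) ⟨0, by omega⟩ := rfl
    rw [h1, h2, finSumFinEquiv_symm_apply_castAdd, finSumFinEquiv_symm_apply_natAdd]
    rfl
  · obtain ⟨q, rfl⟩ : ∃ q, p = k + q := ⟨p - k, by omega⟩
    have h1 : (⟨k + q, hp⟩ : Fin (k + l)) = Fin.natAdd k ⟨q, by omega⟩ := rfl
    have h2 : (⟨k + q + 1, hp1⟩ : Fin (k + l)) = Fin.natAdd k ⟨q + 1, by omega⟩ := rfl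
    rw [h1, h2, finSumFinEquiv_symm_apply_natAdd, finSumFinEquiv_symm_apply_natAdd]
    simp [Bmat]
    omega

section AnalyticOrder

variable {𝕜 : Type*} [NontriviallyNormedField 𝕜] {z₀ : 𝕜}

theorem analyticOrderAt_finsetProd {ι : Type*} {s : Finset ι} {f : ι → 𝕜 → 𝕜}
    (hf : ∀ i ∈ s, AnalyticAt 𝕜 (f i) z₀) :
    analyticOrderAt (fun z => ∏ i ∈ s, f i z) z₀ = ∑ i ∈ s, analyticOrderAt (f i) z₀ := by
  classical
  induction s using Finset.induction_on with
  | empty => simp [analyticOrderAt_eq_zero]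
  | insert a s ha ih =>
    simp only [Finset.forall_mem_insert] at hf
    simp only [Finset.prod_insert ha, Finset.sum_insert ha]
    rw [← ih hf.2]
    exact analyticOrderAt_mul hf.1 (Finset.analyticAt_fun_prod _ hf.2)

theorem card_sub_card_le_analyticOrderAt_prod {ι : Type*} [DecidableEq ι] {s t : Finset ι}
    {f : ι → 𝕜 → 𝕜} (hf : ∀ i ∈ s, AnalyticAt 𝕜 (f i) z₀) (hzero : ∀ i ∈ s \ t, f i z₀ = 0) :
    ((s.card - t.card : ℕ) : ℕ∞) ≤ analyticOrderAt (fun z => ∏ i ∈ s, f i z) z₀ := by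
  rw [analyticOrderAt_finsetProd hf]
  calc ((s.card - t.card : ℕ) : ℕ∞)
      ≤ ∑ _i ∈ s \ t, (1 : ℕ∞) := by
        rw [Finset.sum_const, nsmul_one]
        exact_mod_cast Finset.le_card_sdiff t s
    _ ≤ ∑ i ∈ s \ t, analyticOrderAt (f i) z₀ := Finset.sum_le_sum fun i hi =>
        Order.one_le_iff_ne_zero.2 (analyticOrderAt_ne_zero.2
          ⟨hf i (Finset.mem_sdiff.1 hi).1, hzero i hi⟩)
    _ ≤ ∑ i ∈ s, analyticOrderAt (f i) z₀ := Finset.sum_le_sum_of_subset Finset.sdiff_subset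

theorem analyticOrderAt_pow_succ_sub_mul_pow {u : 𝕜 → 𝕜} (hu : AnalyticAt 𝕜 u 0) (hu0 : u 0 = 0)
    {c : 𝕜} (hc : c ≠ 0) (k : ℕ) :
    analyticOrderAt (fun z => u z ^ (k + 1) - (c * z) ^ k) 0 = k := by
  have hmono : analyticOrderAt (fun z => (c * z) ^ k) 0 = k := by
    rw [AnalyticAt.analyticOrderAt_eq_natCast (by fun_prop)]
    exact ⟨fun _ => c ^ k, analyticAt_const, pow_ne_zero _ hc,
      Eventually.of_forall fun z => by simp [mul_pow, mul_comm]⟩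
  have hpow : (k : ℕ∞) < analyticOrderAt (fun z => u z ^ (k + 1)) 0 := by
    have hu1 : 1 ≤ analyticOrderAt u 0 :=
      Order.one_le_iff_ne_zero.2 (analyticOrderAt_ne_zero.2 ⟨hu, hu0⟩)
    calc (k : ℕ∞) < (k + 1 : ℕ) • 1 := by simpa using ENat.natCast_lt_natCast.2 k.lt_succ_self
      _ ≤ (k + 1 : ℕ) • analyticOrderAt u 0 := by gcongr
      _ = analyticOrderAt (fun z => u z ^ (k + 1)) 0 := (analyticOrderAt_pow hu _).symm
  have hsub : (fun z => u z ^ (k + 1) - (c * z) ^ k) =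
      (fun z => u z ^ (k + 1)) + -fun z => (c * z) ^ k := by
    ext z
    simp [sub_eq_add_neg]
  rw [hsub, analyticOrderAt_add_eq_right_of_lt (by rwa [analyticOrderAt_neg, hmono]),
    analyticOrderAt_neg, hmono]

theorem add_one_le_analyticOrderAt_of_eventuallyEq_mul {F H D : 𝕜 → 𝕜}
    (hFHD : F =ᶠ[𝓝 z₀] H * D) (hH : AnalyticAt 𝕜 H z₀) (hH0 : H z₀ = 0)
    (hD : AnalyticAt 𝕜 D z₀) : analyticOrderAt D z₀ + 1 ≤ analyticOrderAt F z₀ := by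
  rw [analyticOrderAt_congr hFHD, analyticOrderAt_mul hH hD, add_comm]
  exact add_le_add_left (Order.one_le_iff_ne_zero.2 (analyticOrderAt_ne_zero.2 ⟨hH, hH0⟩)) _

end AnalyticOrder

theorem AnalyticOnNhd.eventually_prod_ne_zero {ι : Type*} {s : Finset ι} {f : ι → ℂ → ℂ}
    {U : Set ℂ} {z₀ : ℂ} (hf : ∀ i ∈ s, AnalyticOnNhd ℂ (f i) U) (hU : IsPreconnected U)
    (hz₀ : z₀ ∈ U) (hnz : ∀ i ∈ s, ¬ ∀ z ∈ U, f i z = 0) :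
    ∀ᶠ z in 𝓝[≠] z₀, ∏ i ∈ s, f i z ≠ 0 := by
  have hfne (i) (hi : i ∈ s) : ∀ᶠ z in 𝓝[≠] z₀, f i z ≠ 0 :=
    ((hf i hi) z₀ hz₀).eventually_eq_zero_or_eventually_ne_zero.resolve_left fun hev =>
      hnz i hi fun z hz => (hf i hi).eqOn_zero_of_preconnected_of_eventuallyEq_zero hU hz₀ hev hz
  filter_upwards [(Filter.eventually_all_finset _).2 hfne] with z hz
  exact Finset.prod_ne_zero_iff.2 hz

theorem AnalyticAt.eventuallyEq_mul_prod_of_eq_div {ι : Type*} {s : Finset ι}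
    {f : ι → ℂ → ℂ} {F H : ℂ → ℂ} {U : Set ℂ} {z₀ : ℂ} (hF : AnalyticAt ℂ F z₀)
    (hH : AnalyticAt ℂ H z₀) (hf : ∀ i ∈ s, AnalyticOnNhd ℂ (f i) U) (hU : IsOpen U)
    (hUc : IsPreconnected U) (hz₀ : z₀ ∈ U) (hnz : ∀ i ∈ s, ¬ ∀ z ∈ U, f i z = 0)
    (hdiv : ∀ z ∈ U, ∏ i ∈ s, f i z ≠ 0 → H z = F z / ∏ i ∈ s, f i z) :
    F =ᶠ[𝓝 z₀] H * fun z => ∏ i ∈ s, f i z := by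
  have hD : AnalyticAt ℂ (fun z => ∏ i ∈ s, f i z) z₀ :=
    Finset.analyticAt_fun_prod _ fun i hi => hf i hi z₀ hz₀
  refine (hF.continuousAt.eventuallyEq_nhds_iff_eventuallyEq_nhdsNE
    (hH.mul hD).continuousAt).1 ?_
  filter_upwards [AnalyticOnNhd.eventually_prod_ne_zero hf hUc hz₀ hnz,
    nhdsWithin_le_nhds (hU.mem_nhds hz₀)] with z hDz hz
  rw [Pi.mul_apply, hdiv z hz hDz, div_mul_cancel₀ _ hDz]

theorem analyticOrderAt_eval_Pv_piCoef_BmatPair {k l : ℕ} (hk : 2 ≤ k) (hl : 2 ≤ l)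
    {lam1 lam2 : ℂ} (hne : lam1 ≠ lam2) {c : ℂ} (hc : c ≠ 0) {g : ℂ → ℂ} (hg : AnalyticAt ℂ g 0)
    (hg0 : g 0 = lam1) :
    analyticOrderAt
      (fun ζ => (Pv (k + l) (piCoef (k + l) (BmatPair k l lam1 lam2 (c * ζ)))).eval (g ζ)) 0 =
      (k - 1 : ℕ) := by
  simp_rw [eval_Pv_piCoef_BmatPair hk hl]
  have hfirst := analyticOrderAt_pow_succ_sub_mul_pow (u := fun ζ => g ζ - lam1)
    (by fun_prop) (by simp [hg0]) hc (k - 1)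
  rw [Nat.sub_add_cancel (by omega)] at hfirst
  have hsecond : analyticOrderAt (fun ζ => (g ζ - lam2) ^ l - (c * ζ) ^ (l - 1)) 0 = 0 := by
    refine analyticOrderAt_eq_zero.2 (Or.inr ?_)
    simp [hg0, zero_pow (show l - 1 ≠ 0 by omega), sub_ne_zero.2 hne]
  rw [← add_zero ((k - 1 : ℕ) : ℕ∞), ← hfirst, ← hsecond]
  exact analyticOrderAt_mul (f := fun ζ => (g ζ - lam1) ^ k - (c * ζ) ^ (k - 1))
    (g := fun ζ => (g ζ - lam2) ^ l - (c * ζ) ^ (l - 1)) (by fun_prop) (by fun_prop)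

theorem statement16_general (k l : ℕ) (hk : 3 ≤ k) (hl : 3 ≤ l)
    (lam1 lam2 : ℂ) (hne : lam1 ≠ lam2)
    (ε : ℝ) (hε : 0 < ε)
    (φ : ℂ → Fin (k + l) → ℂ)
    (hφdef : ∀ ζ, φ ζ = piCoef (k + l) (BmatPair k l lam1 lam2 ((ε : ℂ) * ζ)))
    (A' : Matrix (Fin (k + l)) (Fin (k + l)) ℂ)
    (hA' : ∀ i j : Fin (k + l), A' i j =
      if (i : ℕ) = k - 1 ∧ (j : ℕ) = k then 1 else BmatPair k l lam1 lam2 0 i j) :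
    ¬ ∃ (f : ℕ → ℂ → ℂ) (φ11 : ℂ → ℂ),
      (∀ i, 2 ≤ i → i ≤ k + l → DifferentiableOn ℂ (f i) unitDisc) ∧
      (∀ i, 2 ≤ i → i ≤ k + l → ¬ (∀ ζ ∈ unitDisc, f i ζ = 0)) ∧
      (∀ i, 2 ≤ i → i ≤ k + l → ∀ (h1 : i - 2 < k + l) (h2 : i - 1 < k + l),
        f i 0 = A' ⟨i - 2, h1⟩ ⟨i - 1, h2⟩) ∧
      DifferentiableOn ℂ φ11 unitDisc ∧ φ11 0 = lam1 ∧
      ∃ h : ℂ → ℂ, DifferentiableOn ℂ h unitDisc ∧ h 0 = 0 ∧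
        ∀ ζ ∈ unitDisc, (∏ i ∈ Finset.Icc 2 (k + l), f i ζ) ≠ 0 →
          h ζ = -(Pv (k + l) (φ ζ)).eval (φ11 ζ) / ∏ i ∈ Finset.Icc 2 (k + l), f i ζ := by
  rintro ⟨f, φ11, hfdiff, hfnz, hf0, hφdiff, hφ0, h, hhdiff, hh0, hkey⟩
  have hdisc : unitDisc ∈ 𝓝 (0 : ℂ) := Metric.ball_mem_nhds 0 one_pos
  have hfan (i) (hi : i ∈ Finset.Icc 2 (k + l)) : AnalyticOnNhd ℂ (f i) unitDisc :=
    (hfdiff i (Finset.mem_Icc.1 hi).1 (Finset.mem_Icc.1 hi).2).analyticOnNhd Metric.isOpen_ball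
  have hhan : AnalyticAt ℂ h 0 := hhdiff.analyticAt hdisc
  have hordF : analyticOrderAt (fun ζ => -(Pv (k + l) (φ ζ)).eval (φ11 ζ)) 0 = (k - 1 : ℕ) := by
    simp only [hφdef]
    exact analyticOrderAt_neg.trans (analyticOrderAt_eval_Pv_piCoef_BmatPair (by omega)
      (by omega) hne (by exact_mod_cast hε.ne') (hφdiff.analyticAt hdisc) hφ0)
  have hFan := (analyticOrderAt_ne_zero.1 (by rw [hordF]; exact_mod_cast (by omega : k - 1 ≠ 0))).1
  have hFD := hFan.eventuallyEq_mul_prod_of_eq_div hhan hfan Metric.isOpen_ball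
    (convex_ball 0 1).isPreconnected (mem_of_mem_nhds hdisc)
    (fun i hi => hfnz i (Finset.mem_Icc.1 hi).1 (Finset.mem_Icc.1 hi).2) hkey
  -- `f i 0 = A'_{i-1,i}`, and `i = k, k + 1, k + l` index the three nonzero superdiagonal entries
  have hzero : ∀ i ∈ Finset.Icc 2 (k + l) \ {k, k + 1, k + l}, f i 0 = 0 := by
    intro i hi
    simp only [Finset.mem_sdiff, Finset.mem_Icc, Finset.mem_insert, Finset.mem_singleton] at hi
    rw [hf0 i hi.1.1 hi.1.2 (by omega) (by omega), hA', if_neg (by simp only; omega)]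
    exact BmatPair_zero_apply_of_val_eq_add_one _ _ _ _ (by simp only; omega)
      (by simp only; omega) (by simp only; omega)
  have hfan0 (i) (hi : i ∈ Finset.Icc 2 (k + l)) := hfan i hi 0 (mem_of_mem_nhds hdisc)
  have hord := (add_le_add (card_sub_card_le_analyticOrderAt_prod hfan0 hzero) le_rfl).trans
    (add_one_le_analyticOrderAt_of_eventuallyEq_mul hFD hhan hh0
      (Finset.analyticAt_fun_prod _ hfan0))
  rw [hordF, Nat.card_Icc] at hord
  have hcard := Finset.card_le_three (a := k) (b := k + 1) (c := k + l)
  norm_cast at hord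
  omega

/-- counter-example in dimension `n = k + l ≥ 6`: the data required by the
lifting formula of Proposition 4.4 at the derogatory matrix `A'` cannot exist. -/
theorem statement16 (k l : ℕ) (hk : 3 ≤ k) (hl : 3 ≤ l)
    (lam1 lam2 : ℂ) (hlam1 : lam1 ∈ unitDisc) (hlam2 : lam2 ∈ unitDisc) (hne : lam1 ≠ lam2)
    (ε : ℝ) (hε : 0 < ε)
    (φ : ℂ → Fin (k + l) → ℂ)
    (hφdef : ∀ ζ, φ ζ = piCoef (k + l) (BmatPair k l lam1 lam2 ((ε : ℂ) * ζ)))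
    (hφG : Set.MapsTo φ unitDisc (SymPolydisc (k + l)))
    (A' : Matrix (Fin (k + l)) (Fin (k + l)) ℂ)
    (hA' : ∀ i j : Fin (k + l), A' i j =
      if (i : ℕ) = k - 1 ∧ (j : ℕ) = k then 1 else BmatPair k l lam1 lam2 0 i j) :
    ¬ ∃ (f : ℕ → ℂ → ℂ) (φ11 : ℂ → ℂ),
      (∀ i, 2 ≤ i → i ≤ k + l → DifferentiableOn ℂ (f i) unitDisc) ∧
      (∀ i, 2 ≤ i → i ≤ k + l → ¬ (∀ ζ ∈ unitDisc, f i ζ = 0)) ∧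
      (∀ i, 2 ≤ i → i ≤ k + l → ∀ (h1 : i - 2 < k + l) (h2 : i - 1 < k + l),
        f i 0 = A' ⟨i - 2, h1⟩ ⟨i - 1, h2⟩) ∧
      DifferentiableOn ℂ φ11 unitDisc ∧ φ11 0 = lam1 ∧
      ∃ h : ℂ → ℂ, DifferentiableOn ℂ h unitDisc ∧ h 0 = 0 ∧
        ∀ ζ ∈ unitDisc, (∏ i ∈ Finset.Icc 2 (k + l), f i ζ) ≠ 0 →
          h ζ = -(Pv (k + l) (φ ζ)).eval (φ11 ζ) / ∏ i ∈ Finset.Icc 2 (k + l), f i ζ :=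
  statement16_general k l hk hl lam1 lam2 hne ε hε φ hφdef A' hA'
end
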